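/- arXiv:1811.03337 — 2 statements merged into one kernel-verified Lean document; each statement's English description precedes it below -/
import Mathlib

section
/- Correctness of the phase recursion: Let G be a directed graph with nonnegative weights, h a positive integer, s and v vertices, and S a set of vertices such that either (a) hop(s,v) ≤ h, or (b) some b ∈ S lies on the shortest s-v path with hop(s,b) ≤ h. Let d̂(s,b) be values satisfying d̂(s,b) ≥ dist(s,b) with equality whenever hop(s,b) ≤ h. Then min( d̂(s,v) [if defined], min over b ∈ S of d̂(s,b) + dist(b,v) ) = dist(s,v), where in case (a) the first term achieves the minimum and in case (b) the second does; moreover every term is ≥ dist(s,v). -/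
section PhaseRecursion

variable {V α : Type*} {dist : V → V → α} {dhat : V → α} {S : Set V} {s v : V}

def phaseCandidates [Add α] (dist : V → V → α) (dhat : V → α) (S : Set V) (v : V) : Set α :=
  insert (dhat v) ((fun b => dhat b + dist b v) '' S)

theorem dist_le_of_mem_phaseCandidates [AddCommMonoid α] [PartialOrder α] [IsOrderedAddMonoid α]
    (htri : ∀ b, dist s v ≤ dist s b + dist b v) (hacc : ∀ x, dist s x ≤ dhat x) {x : α}
    (hx : x ∈ phaseCandidates dist dhat S v) :
    dist s v ≤ x := by
  rcases hx with rfl | ⟨b, -, rfl⟩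
  · exact hacc v
  · exact (htri b).trans (add_le_add_left (hacc b) _)

theorem dist_mem_phaseCandidates [Add α] {hop : V → V → ℕ} {h : ℕ}
    (haccEq : ∀ x, hop s x ≤ h → dhat x = dist s x)
    (hcase : hop s v ≤ h ∨ ∃ b ∈ S, dist s v = dist s b + dist b v ∧ hop s b ≤ h) :
    dist s v ∈ phaseCandidates dist dhat S v := by
  rcases hcase with hv | ⟨b, hb, hsplit, hb_hop⟩
  · exact .inl (haccEq v hv).symm
  · exact .inr ⟨b, hb, by dsimp only; rw [haccEq b hb_hop, hsplit]⟩

end PhaseRecursion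

/-- Correctness of the phase recursion: `dhat` are `h`-hop-accurate estimates of
distances from `s` (`dhat x ≥ dist s x`, with equality when `hop s x ≤ h`). If either
(a) `hop s v ≤ h`, or (b) some `b ∈ S` lies on the shortest `s`-`v` path with
`hop s b ≤ h`, then `min(dhat v, min_{b ∈ S} (dhat b + dist b v)) = dist s v`, and every
term in the minimum is `≥ dist s v`. -/
theorem stmt_12 {V : Type*} (dist : V → V → ℝ) (hop : V → V → ℕ) (h : ℕ)
    (s v : V) (S : Finset V) (dhat : V → ℝ)
    (htri : ∀ b, dist s v ≤ dist s b + dist b v)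
    (hacc : ∀ x, dist s x ≤ dhat x)
    (haccEq : ∀ x, hop s x ≤ h → dhat x = dist s x)
    (hcase : hop s v ≤ h ∨ ∃ b ∈ S, dist s v = dist s b + dist b v ∧ hop s b ≤ h) :
    sInf (insert (dhat v) ((fun b => dhat b + dist b v) '' (S : Set V))) = dist s v ∧
      ∀ x ∈ insert (dhat v) ((fun b => dhat b + dist b v) '' (S : Set V)),
        dist s v ≤ x := by
  have hleast : IsLeast (phaseCandidates dist dhat (S : Set V) v) (dist s v) :=
    ⟨dist_mem_phaseCandidates haccEq hcase,
      fun _ hx => dist_le_of_mem_phaseCandidates htri hacc hx⟩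
  exact ⟨hleast.csInf_eq, fun _ hx => hleast.2 hx⟩
end

section
/- Monotonicity of the filtered output: in an execution of filtered broadcast, the value output^v at a vertex v is non-increasing over time, and at every point in time output^v equals either ∞ or d̂(s,b) + dist(b,v) for some b ∈ B for which v has received the message M(s,b). Consequently, at all times output^v ≥ min over b ∈ B of d̂(s,b) + dist(b,v). -/
/-- Monotonicity of the filtered-broadcast output at a fixed vertex `v`: `output` starts
at `⊤`, and is updated to `dhat b + dist b v` only upon receiving message `M(s,b)` from
some `b ∈ B` when this value is strictly smaller than the current output. Then `output`
is non-increasing over time, always equals `⊤` or `dhat b + dist b v` for some received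
`b`, and is always at least `min_{b ∈ B} (dhat b + dist b v)`. -/
theorem stmt_14 {V : Type*} (dist : V → V → ℝ) (dhat : V → ℝ) (v : V)
    (B : Finset V) (output : ℕ → WithTop ℝ) (received : ℕ → Finset V)
    (hrecB : ∀ t, received t ⊆ B)
    (hrecMono : ∀ t, received t ⊆ received (t + 1))
    (h0 : output 0 = ⊤)
    (hstep : ∀ t, output (t + 1) = output t ∨
      ∃ b ∈ received (t + 1),
        ((dhat b + dist b v : ℝ) : WithTop ℝ) < output t ∧
          output (t + 1) = ((dhat b + dist b v : ℝ) : WithTop ℝ)) :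
    (∀ t t', t ≤ t' → output t' ≤ output t) ∧
      (∀ t, output t = ⊤ ∨
        ∃ b ∈ received t, output t = ((dhat b + dist b v : ℝ) : WithTop ℝ)) ∧
      (∀ t, B.inf (fun b => ((dhat b + dist b v : ℝ) : WithTop ℝ)) ≤ output t) := by
  have hmono1 : ∀ t, output (t + 1) ≤ output t := by
    intro t
    rcases hstep t with h | ⟨b, _, hlt, heq⟩
    · exact h.le
    · rw [heq]; exact hlt.le
  have hmono : ∀ t t', t ≤ t' → output t' ≤ output t := by
    intro t t' h
    induction t' with
    | zero =>
      have : t = 0 := Nat.le_zero.mp h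
      subst this; rfl
    | succ n ih =>
      rcases Nat.lt_or_ge t (n+1) with h' | h'
      · exact (hmono1 n).trans (ih (by omega))
      · have : t = n + 1 := le_antisymm h h'
        subst this; rfl
  have hinv : ∀ t, output t = ⊤ ∨
      ∃ b ∈ received t, output t = ((dhat b + dist b v : ℝ) : WithTop ℝ) := by
    intro t
    induction t with
    | zero => exact Or.inl h0
    | succ n ih =>
      rcases hstep n with h | ⟨b, hb, _, heq⟩
      · rcases ih with h' | ⟨b, hb, hb'⟩
        · exact Or.inl (h.trans h')
        · exact Or.inr ⟨b, hrecMono n hb, h.trans hb'⟩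
      · exact Or.inr ⟨b, hb, heq⟩
  refine ⟨hmono, hinv, fun t => ?_⟩
  rcases hinv t with h | ⟨b, hb, hb'⟩
  · exact h ▸ le_top
  · rw [hb']
    exact Finset.inf_le (hrecB t hb)
end
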